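/- If S is a nearly Gorenstein numerical semigroup with NG-vector (f_1, ..., f_ν), then there exist two distinct indices i ≠ j with f_i = f_j. Moreover, if f_1, ..., f_{ν-1} are pairwise distinct, then PF(S) = {f_1, ..., f_{ν-1}} and the type of S equals ν - 1. -/

import Mathlib

/-- A numerical semigroup: a subset of ℕ containing 0, closed under addition,
with finite complement. -/
def IsNumSgp (S : Set ℕ) : Prop :=
  0 ∈ S ∧ (∀ a ∈ S, ∀ b ∈ S, a + b ∈ S) ∧ (Sᶜ : Set ℕ).Finite

/-- An integer belongs to (the image in ℤ of) S. -/
def memZ (S : Set ℕ) (z : ℤ) : Prop := ∃ s ∈ S, (s : ℤ) = z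

/-- F is the Frobenius number of S: the largest natural number not in S. -/
def IsFrob (S : Set ℕ) (F : ℕ) : Prop := F ∉ S ∧ ∀ n, F < n → n ∈ S

/-- The set of pseudo-Frobenius numbers of S. -/
def PF (S : Set ℕ) : Set ℕ := {f | f ∉ S ∧ ∀ s ∈ S, s ≠ 0 → f + s ∈ S}

/-- n is a minimal generator of S. -/
def IsMinGen (S : Set ℕ) (n : ℕ) : Prop :=
  n ∈ S ∧ n ≠ 0 ∧ ¬∃ a ∈ S, ∃ b ∈ S, a ≠ 0 ∧ b ≠ 0 ∧ a + b = n

/-- S is almost symmetric (Nari): F - f ∈ PF(S) for every f ∈ PF(S). -/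
def AlmostSym (S : Set ℕ) (F : ℕ) : Prop :=
  ∀ f ∈ PF S, ∃ g ∈ PF S, (g : ℤ) = (F : ℤ) - (f : ℤ)

/-- S is symmetric: PF(S) = {F(S)} (vacuously true when S = ℕ). -/
def IsSym (S : Set ℕ) : Prop := ∀ F, IsFrob S F → PF S = {F}

/-- (f_1,...,f_ν) is an NG-vector for S with minimal generators n_1,...,n_ν. -/
def IsNGVector {ν : ℕ} (S : Set ℕ) (n f : Fin ν → ℕ) : Prop :=
  ∀ i, f i ∈ PF S ∧ ∀ g ∈ PF S, memZ S ((n i : ℤ) + (f i : ℤ) - (g : ℤ))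

/-- S is nearly Gorenstein (generator criterion): for each minimal generator m
there is f ∈ PF(S) with m + f - g ∈ S for all g ∈ PF(S). -/
def NearlyGGen (S : Set ℕ) : Prop :=
  ∀ m, IsMinGen S m → ∃ f ∈ PF S, ∀ g ∈ PF S, memZ S ((m : ℤ) + (f : ℤ) - (g : ℤ))

/-- The canonical ideal K(S) = {z ∈ ℤ : F - z ∉ S}. -/
def Kan (S : Set ℕ) (F : ℕ) : Set ℤ := {z | ¬ memZ S ((F : ℤ) - z)}

/-- The relative ideal (S - K(S)) = {z ∈ ℤ : z + K(S) ⊆ S}. -/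
def SmK (S : Set ℕ) (F : ℕ) : Set ℤ := {z | ∀ k ∈ Kan S F, memZ S (z + k)}

/-- S is nearly Gorenstein: M(S) ⊆ K(S) + (S - K(S)). -/
def NearlyG (S : Set ℕ) (F : ℕ) : Prop :=
  ∀ m ∈ S, m ≠ 0 → ∃ k ∈ Kan S F, ∃ x ∈ SmK S F, k + x = (m : ℤ)

/-!
The NG-condition at i with g = F gives 0 ≠ n_i + f_i - F ∈ S, hence f_i + n_i ≥ F + n₁; for i = 1
this forces f₁ = F, so the condition at 1 says n₁ + F - g ∈ S for every g ∈ PF(S). Moreover two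
pseudo-Frobenius numbers that differ by an element of S are equal. If f₁, …, f_{ν-1} are distinct,
it follows by induction on i that n₁ + F - f_i ∈ S only decomposes as n_j + s with j ≥ i, whence
f_i + n_i = F + n₁ for i < ν. For any other g ∈ PF(S), neither n₁ + F - g nor F + n₁ can then be
written as n_i + s with i < ν and s ∈ S, so both are multiples of n_ν, and hence so is their
difference g ∉ S, which is absurd. Thus PF(S) = {f₁, …, f_{ν-1}}, and f_ν repeats one of them.
-/

section NumericalSemigroup

variable {S : Set ℕ} {F ν : ℕ} {n : Fin ν → ℕ}

lemma IsFrob.le_of_mem_PF (hF : IsFrob S F) {g : ℕ} (hg : g ∈ PF S) : g ≤ F :=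
  not_lt.1 fun h => hg.1 (hF.2 g h)

lemma IsFrob.mem_PF (hF : IsFrob S F) : F ∈ PF S :=
  ⟨hF.1, fun _ _ hs => hF.2 _ (by omega)⟩

lemma PF.eq_of_add_eq {g h s : ℕ} (hg : g ∈ PF S) (hh : h ∈ PF S) (hs : s ∈ S)
    (e : g + s = h) : g = h := by
  by_contra hne
  exact hh.1 (e ▸ hg.2 s hs (by omega))

lemma IsNumSgp.mul_mem (hS : IsNumSgp S) {x : ℕ} (hx : x ∈ S) (c : ℕ) : c * x ∈ S := by
  induction c with
  | zero => simpa using hS.1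
  | succ c ih => simpa [Nat.succ_mul] using hS.2.1 _ ih x hx

lemma IsNumSgp.exists_eq_gen_add (hS : IsNumSgp S) (hgen : ∀ m, IsMinGen S m → ∃ i, n i = m)
    {s : ℕ} (hs : s ∈ S) (hs0 : s ≠ 0) : ∃ i, ∃ t ∈ S, s = n i + t := by
  induction s using Nat.strong_induction_on with
  | _ s IH =>
    by_cases hm : IsMinGen S s
    · obtain ⟨i, rfl⟩ := hgen s hm
      exact ⟨i, 0, hS.1, rfl⟩
    · obtain ⟨a, ha, b, hb, ha0, hb0, rfl⟩ : ∃ a ∈ S, ∃ b ∈ S, a ≠ 0 ∧ b ≠ 0 ∧ a + b = s := by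
        by_contra h
        exact hm ⟨hs, hs0, h⟩
      obtain ⟨i, t, ht, rfl⟩ := IH a (by omega) ha ha0
      exact ⟨i, t + b, hS.2.1 t ht b hb, by ring⟩

lemma IsNumSgp.gen_zero_le (hS : IsNumSgp S) (hgen : ∀ m, IsMinGen S m → ∃ i, n i = m)
    (hmono : Monotone n) (hν : 0 < ν) {s : ℕ} (hs : s ∈ S) (hs0 : s ≠ 0) : n ⟨0, hν⟩ ≤ s := by
  obtain ⟨i, t, -, rfl⟩ := hS.exists_eq_gen_add hgen hs hs0
  have := hmono (Fin.le_def.2 (Nat.zero_le i.val) : (⟨0, hν⟩ : Fin ν) ≤ i)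
  omega

lemma IsNumSgp.exists_eq_mul_of_forall_eq_gen_add (hS : IsNumSgp S)
    (hgen : ∀ m, IsMinGen S m ↔ ∃ i, n i = m) {k : Fin ν} {z : ℕ} (hz : z ∈ S)
    (hk : ∀ l, ∀ t ∈ S, z = n l + t → l = k) : ∃ c, z = c * n k := by
  have hnk : IsMinGen S (n k) := (hgen _).2 ⟨k, rfl⟩
  induction z using Nat.strong_induction_on with
  | _ z IH =>
    rcases eq_or_ne z 0 with rfl | hz0
    · exact ⟨0, by simp⟩
    obtain ⟨j, t, ht, rfl⟩ := hS.exists_eq_gen_add (fun m => (hgen m).1) hz hz0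
    obtain rfl := hk j t ht rfl
    have ht' : ∀ l, ∀ s ∈ S, t = n l + s → l = j := fun l s hs e =>
      hk l (s + n j) (hS.2.1 s hs _ hnk.1) (by omega)
    obtain ⟨c, rfl⟩ := IH t (by have := hnk.2.1; omega) ht ht'
    exact ⟨c + 1, by ring⟩

end NumericalSemigroup

section NGVector

variable {S : Set ℕ} {F ν : ℕ} {n f : Fin ν → ℕ}

lemma IsNGVector.frob_add_gen_zero_le (hS : IsNumSgp S) (hF : IsFrob S F)
    (hgen : ∀ m, IsMinGen S m ↔ ∃ i, n i = m) (hmono : Monotone n) (hNG : IsNGVector S n f)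
    (hν : 0 < ν) (i : Fin ν) : F + n ⟨0, hν⟩ ≤ f i + n i := by
  obtain ⟨z, hz, e⟩ := (hNG i).2 F hF.mem_PF
  have hni : IsMinGen S (n i) := (hgen _).2 ⟨i, rfl⟩
  have hz0 : z ≠ 0 := by
    rintro rfl
    exact hF.1 (by convert (hNG i).1.2 _ hni.1 hni.2.1 using 1; omega)
  have := hS.gen_zero_le (fun m => (hgen m).1) hmono hν hz hz0
  omega

lemma IsNGVector.apply_zero (hS : IsNumSgp S) (hF : IsFrob S F)
    (hgen : ∀ m, IsMinGen S m ↔ ∃ i, n i = m) (hmono : Monotone n) (hNG : IsNGVector S n f)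
    (hν : 0 < ν) : f ⟨0, hν⟩ = F := by
  have := hNG.frob_add_gen_zero_le hS hF hgen hmono hν ⟨0, hν⟩
  have := hF.le_of_mem_PF (hNG ⟨0, hν⟩).1
  omega

/-- The natural-number form of `n₁ + F - g ∈ S`. -/
lemma IsNGVector.exists_mem_add_eq (hS : IsNumSgp S) (hF : IsFrob S F)
    (hgen : ∀ m, IsMinGen S m ↔ ∃ i, n i = m) (hmono : Monotone n) (hNG : IsNGVector S n f)
    (hν : 0 < ν) {g : ℕ} (hg : g ∈ PF S) : ∃ z ∈ S, g + z = F + n ⟨0, hν⟩ := by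
  obtain ⟨z, hz, e⟩ := (hNG ⟨0, hν⟩).2 g hg
  rw [hNG.apply_zero hS hF hgen hmono hν] at e
  exact ⟨z, hz, by omega⟩

lemma IsNGVector.add_gen_eq_of_injOn (hS : IsNumSgp S) (hF : IsFrob S F)
    (hgen : ∀ m, IsMinGen S m ↔ ∃ i, n i = m) (hmono : Monotone n) (hNG : IsNGVector S n f)
    (hν : 0 < ν) (hinj : Set.InjOn f {j | (j : ℕ) < ν - 1}) (i : Fin ν) (hi : (i : ℕ) < ν - 1) :
    f i + n i = F + n ⟨0, hν⟩ := by
  induction i using WellFoundedLT.induction with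
  | ind i IH =>
    obtain ⟨z, hz, hiz⟩ := hNG.exists_mem_add_eq hS hF hgen hmono hν (hNG i).1
    have hz0 : z ≠ 0 := by
      rintro rfl
      have := hF.le_of_mem_PF (hNG i).1
      have := ((hgen _).2 ⟨⟨0, hν⟩, rfl⟩).2.1
      omega
    obtain ⟨j, t, ht, rfl⟩ := hS.exists_eq_gen_add (fun m => (hgen m).1) hz hz0
    -- for an earlier index j, `z = n j + t` would exhibit `f j - f i = t ∈ S`
    have hij : i ≤ j := by
      by_contra! hji
      have hj : (j : ℕ) < ν - 1 := lt_trans hji hi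
      have hfj := IH j hji hj
      have := PF.eq_of_add_eq (hNG i).1 (hNG j).1 ht (by omega)
      exact hji.ne (hinj hj hi this.symm)
    have := hmono hij
    have := hNG.frob_add_gen_zero_le hS hF hgen hmono hν i
    omega

lemma IsNGVector.PF_subset_image_of_injOn (hS : IsNumSgp S) (hF : IsFrob S F)
    (hgen : ∀ m, IsMinGen S m ↔ ∃ i, n i = m) (hmono : Monotone n) (hNG : IsNGVector S n f)
    (hν : 0 < ν) (hinj : Set.InjOn f {j | (j : ℕ) < ν - 1}) :
    PF S ⊆ f '' {j | (j : ℕ) < ν - 1} := by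
  intro g hg
  by_contra hno
  set L : Fin ν := ⟨ν - 1, by omega⟩
  have head_or_last : ∀ l : Fin ν, (l : ℕ) < ν - 1 ∨ l = L := fun l =>
    (Nat.lt_or_ge l (ν - 1)).imp_right fun h => Fin.ext (by simp only [L]; omega)
  have hfl := hNG.add_gen_eq_of_injOn hS hF hgen hmono hν hinj
  obtain ⟨z, hz, hgz⟩ := hNG.exists_mem_add_eq hS hF hgen hmono hν hg
  obtain ⟨c, hc⟩ : ∃ c, z = c * n L :=
    hS.exists_eq_mul_of_forall_eq_gen_add hgen hz fun l t ht e =>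
      (head_or_last l).resolve_left fun hl =>
        hno ⟨l, hl, (PF.eq_of_add_eq hg (hNG l).1 ht (by have := hfl l hl; omega)).symm⟩
  have hn0 := ((hgen _).2 ⟨⟨0, hν⟩, rfl⟩).2.1
  obtain ⟨m, hm⟩ : ∃ m, F + n ⟨0, hν⟩ = m * n L :=
    hS.exists_eq_mul_of_forall_eq_gen_add hgen (hF.2 _ (by omega)) fun l t ht e =>
      (head_or_last l).resolve_left fun hl =>
        (hNG l).1.1 (by convert ht using 1; have := hfl l hl; omega)
  have hgL : g = (m - c) * n L := by rw [Nat.sub_mul]; omega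
  exact hg.1 (hgL ▸ hS.mul_mem ((hgen _).2 ⟨L, rfl⟩).1 _)

end NGVector

theorem stmt11_general (ν : ℕ) (S : Set ℕ) (F : ℕ) (n f : Fin ν → ℕ)
    (hS : IsNumSgp S) (hF : IsFrob S F) (hmono : StrictMono n)
    (hgen : ∀ m, IsMinGen S m ↔ ∃ i, n i = m)
    (hNG : IsNGVector S n f) :
    (∃ i j : Fin ν, i ≠ j ∧ f i = f j) ∧
    ((∀ j k : Fin ν, (j : ℕ) < ν - 1 → (k : ℕ) < ν - 1 → j ≠ k → f j ≠ f k) →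
      PF S = {g : ℕ | ∃ j : Fin ν, (j : ℕ) < ν - 1 ∧ f j = g} ∧
      (PF S).ncard = ν - 1) := by
  obtain ⟨i, -⟩ := hS.exists_eq_gen_add (fun m => (hgen m).1) (hF.2 (F + 1) F.lt_succ_self)
    F.succ_ne_zero
  have hν := i.pos
  have hinj (hd : ∀ j k : Fin ν, (j : ℕ) < ν - 1 → (k : ℕ) < ν - 1 → j ≠ k → f j ≠ f k) :
      Set.InjOn f {j | (j : ℕ) < ν - 1} := fun j hj k hk e =>
    not_not.1 fun hne => hd j k hj hk hne e
  have hPF (hd : Set.InjOn f {j | (j : ℕ) < ν - 1}) : PF S = f '' {j | (j : ℕ) < ν - 1} :=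
    (hNG.PF_subset_image_of_injOn hS hF hgen hmono.monotone hν hd).antisymm
      (Set.image_subset_iff.2 fun j _ => (hNG j).1)
  refine ⟨?_, fun hd => ⟨hPF (hinj hd), ?_⟩⟩
  · by_cases hd : ∀ j k : Fin ν, (j : ℕ) < ν - 1 → (k : ℕ) < ν - 1 → j ≠ k → f j ≠ f k
    · let L : Fin ν := ⟨ν - 1, by omega⟩
      obtain ⟨j, hj, e⟩ := (hPF (hinj hd)).le (hNG L).1
      exact ⟨j, L, Fin.ne_of_val_ne hj.ne, e⟩
    · push Not at hd
      obtain ⟨j, k, -, -, hne, e⟩ := hd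
      exact ⟨j, k, hne, e⟩
  · rw [hPF (hinj hd), (hinj hd).ncard_image, ← Finset.coe_filter_univ, Set.ncard_coe_finset,
      Fin.card_filter_val_lt]
    omega

theorem stmt11 (ν : ℕ) (hν : 2 ≤ ν) (S : Set ℕ) (F : ℕ) (n f : Fin ν → ℕ)
    (hS : IsNumSgp S) (hF : IsFrob S F) (hmono : StrictMono n)
    (hgen : ∀ m, IsMinGen S m ↔ ∃ i, n i = m)
    (hNG : IsNGVector S n f) :
    (∃ i j : Fin ν, i ≠ j ∧ f i = f j) ∧
    ((∀ j k : Fin ν, (j : ℕ) < ν - 1 → (k : ℕ) < ν - 1 → j ≠ k → f j ≠ f k) →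
      PF S = {g : ℕ | ∃ j : Fin ν, (j : ℕ) < ν - 1 ∧ f j = g} ∧
      (PF S).ncard = ν - 1) :=
  stmt11_general ν S F n f hS hF hmono hgen hNG
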